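/- Let Γ be a group containing an element γ of infinite order, and let ρ : Γ → GL_n(ℂ) be a homomorphism such that ρ(γ) has finite order. Suppose every infinite normal subgroup of Γ has finite index. Then there exists a finite-index normal subgroup N of Γ with N ⊆ ker ρ; in particular ρ(Γ) is finite. -/

import Mathlib

/-- If `Γ` contains an element `γ` of infinite order with `ρ(γ)` of finite
order, and every infinite normal subgroup of `Γ` has finite index, then
`ker ρ` contains a finite-index normal subgroup; in particular `ρ(Γ)` is finite. -/
theorem stmt3 (Γ : Type*) [Group Γ] (n : ℕ) (ρ : Γ →* GL (Fin n) ℂ)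
    (γ : Γ) (hγ : ¬ IsOfFinOrder γ) (hργ : IsOfFinOrder (ρ γ))
    (hnorm : ∀ N : Subgroup Γ, N.Normal → (N : Set Γ).Infinite → N.FiniteIndex) :
    (∃ N : Subgroup Γ, N.Normal ∧ N.FiniteIndex ∧ N ≤ ρ.ker) ∧
      (Set.range ρ).Finite := by
  obtain ⟨k, hk, hke⟩ := hργ.exists_pow_eq_one
  have hmem : γ ^ k ∈ ρ.ker := by
    simp [MonoidHom.mem_ker, map_pow, hke]
  have hgk : ¬ IsOfFinOrder (γ ^ k) := by
    intro h
    exact hγ (h.of_pow hk.ne')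
  have hinj : Function.Injective fun m : ℕ => (γ ^ k) ^ m := by
    intro a b hab
    exact injective_pow_iff_not_isOfFinOrder.mpr hgk hab
  have hinf : (ρ.ker : Set Γ).Infinite :=
    Set.infinite_of_injective_forall_mem hinj fun m => ρ.ker.pow_mem hmem m
  have hfi : ρ.ker.FiniteIndex := hnorm _ (MonoidHom.normal_ker ρ) hinf
  refine ⟨⟨ρ.ker, MonoidHom.normal_ker ρ, hfi, le_rfl⟩, ?_⟩
  have : Finite (Γ ⧸ ρ.ker) := Subgroup.finite_quotient_of_finiteIndex
  have : Finite ρ.range := Finite.of_equiv _ (QuotientGroup.quotientKerEquivRange ρ).toEquiv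
  have : (ρ.range : Set (GL (Fin n) ℂ)).Finite := Set.toFinite _
  simpa [MonoidHom.coe_range] using this
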